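/- arXiv:1602.02987 — 2 statements merged into one kernel-verified Lean document; each statement's English description precedes it below -/
import Mathlib

section
/- Let v ∈ V and {u,w} ∈ E with v ∉ {u,w}, v not adjacent to u and v not adjacent to w in Γ. Then the inequality x_v + (1/2)x_u + (1/2)x_w − 2·Σ_{i ∈ V∖{u,v,w}} x_i ≤ 1 is valid on P(Γ) and its set of maximizers on P(Γ) is the segment [χ({v}), χ({u,w})], so these two vertices are adjacent. -/
open Set

noncomputable section

variable {V : Type*}

/-- Characteristic vector of a set of nodes. -/
def chi (S : Set V) : V → ℝ := S.indicator (fun _ => (1 : ℝ))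

/-- The candidate vertex set of the polytope `P(Γ)`. -/
def polyVerts (G : SimpleGraph V) : Set (V → ℝ) :=
  {x | x = chi (∅ : Set V) ∨ (∃ v : V, x = chi {v}) ∨
        (∃ u w : V, G.Adj u w ∧ x = chi {u, w})}

/-- The polytope `P(Γ)`. -/
def poly (G : SimpleGraph V) : Set (V → ℝ) := convexHull ℝ (polyVerts G)

/-- Two points are adjacent vertices of a convex set `P` when the segment
joining them is a (1-dimensional) face, i.e. an extreme subset of `P`. -/
def AdjVert (P : Set (V → ℝ)) (p q : V → ℝ) : Prop :=
  p ≠ q ∧ IsExtreme ℝ P (segment ℝ p q)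

/-- A combinatorial automorphism of `P`: a bijection of the vertex (extreme point)
set of `P` mapping the vertex set of each face onto the vertex set of some face. -/
def IsCombAut (P : Set (V → ℝ)) (σ : (V → ℝ) → (V → ℝ)) : Prop :=
  Set.BijOn σ (P.extremePoints ℝ) (P.extremePoints ℝ) ∧
  ∀ F : Set (V → ℝ), IsExtreme ℝ P F →
    ∃ F' : Set (V → ℝ), IsExtreme ℝ P F' ∧
      σ '' (F ∩ P.extremePoints ℝ) = F' ∩ P.extremePoints ℝ

/-- An automorphism of the skeleton of `P`: a bijection of the vertex set of `P`
preserving adjacency (in both directions). -/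
def IsSkelAut (P : Set (V → ℝ)) (σ : (V → ℝ) → (V → ℝ)) : Prop :=
  Set.BijOn σ (P.extremePoints ℝ) (P.extremePoints ℝ) ∧
  ∀ p ∈ P.extremePoints ℝ, ∀ q ∈ P.extremePoints ℝ,
    (AdjVert P p q ↔ AdjVert P (σ p) (σ q))

/-!
The inequality reads `∑ c_i x_i ≤ 1` with `c_v = 1`, `c_u = c_w = 1/2` and `c_i = -2` otherwise.
On the generators of `P(Γ)` it takes the values `0`, `c_a` and `c_a + c_b` (for an edge `ab`);
since `v` is adjacent to neither `u` nor `w`, these are at most `1`, with equality exactly at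
`χ{v}` and `χ{u,w}`. A linear inequality valid on a set is valid on its convex hull, where it is
attained exactly on the convex hull of the generators attaining it — here the segment
`[χ{v}, χ{u,w}]`; and the set of maximizers of a linear functional is always a face.
-/

section Face

variable {𝕜 E : Type*} [Field 𝕜] [LinearOrder 𝕜] [IsStrictOrderedRing 𝕜] [AddCommGroup E]
  [Module 𝕜 E] {f : E →ₗ[𝕜] 𝕜} {c : 𝕜} {A S : Set E}

lemma apply_le_of_mem_convexHull (hS : ∀ s ∈ S, f s ≤ c) {x : E} (hx : x ∈ convexHull 𝕜 S) :
    f x ≤ c :=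
  convexHull_min hS (convex_halfSpace_le f.isLinear c) hx

lemma isExtreme_sep_apply_eq (hA : ∀ x ∈ A, f x ≤ c) : IsExtreme 𝕜 A {x ∈ A | f x = c} where
  subset := sep_subset _ _
  left_mem_of_mem_openSegment := by
    rintro x hx y hy z ⟨-, hz⟩ ⟨a, b, ha, hb, hab, rfl⟩
    have hsum : a * (c - f x) + b * (c - f y) = 0 := by
      linear_combination c * hab - (by simpa using hz : a * f x + b * f y = c)
    exact ⟨hx, by nlinarith [hA x hx, hA y hy]⟩

lemma sep_convexHull_apply_eq (hS : ∀ s ∈ S, f s ≤ c) :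
    {x ∈ convexHull 𝕜 S | f x = c} = convexHull 𝕜 {s ∈ S | f s = c} := by
  refine Subset.antisymm ?_ <| convexHull_min (fun s hs => ⟨subset_convexHull 𝕜 S hs.1, hs.2⟩)
    ((convex_convexHull 𝕜 S).inter (convex_hyperplane f.isLinear c))
  have hface := isExtreme_sep_apply_eq (f := f) fun _ => apply_le_of_mem_convexHull hS
  -- `K` is convex because the face is extreme: an open segment meeting it has both ends in it.
  let K := {x ∈ convexHull 𝕜 S | f x = c → x ∈ convexHull 𝕜 {s ∈ S | f s = c}}
  have hK : Convex 𝕜 K := by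
    refine convex_iff_openSegment_subset.2 fun x hx y hy z hz => ?_
    have hzS : z ∈ convexHull 𝕜 S := (convex_convexHull 𝕜 S).openSegment_subset hx.1 hy.1 hz
    refine ⟨hzS, fun hfz => ?_⟩
    have hxF := hface.left_mem_of_mem_openSegment hx.1 hy.1 ⟨hzS, hfz⟩ hz
    have hyF := hface.left_mem_of_mem_openSegment hy.1 hx.1 ⟨hzS, hfz⟩ (openSegment_symm 𝕜 x y ▸ hz)
    exact (convex_convexHull 𝕜 _).openSegment_subset (hx.2 hxF.2) (hy.2 hyF.2) hz
  have hSK : S ⊆ K := fun s hs => ⟨subset_convexHull 𝕜 S hs, fun h => subset_convexHull 𝕜 _ ⟨hs, h⟩⟩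
  rintro x ⟨hx, hfx⟩
  exact (convexHull_min hSK hK hx).2 hfx

end Face

lemma chi_empty : chi (∅ : Set V) = 0 := indicator_empty _

lemma chi_singleton [DecidableEq V] (a : V) : chi {a} = Pi.single a 1 := indicator_singleton a _

lemma chi_pair {a b : V} (hab : a ≠ b) : chi {a, b} = chi {a} + chi {b} :=
  indicator_union_of_disjoint (disjoint_singleton.2 hab) _

section FaceFunctional

variable [DecidableEq V] (v u w : V)

def faceCoeff (a : V) : ℝ := if a = v then 1 else if a = u ∨ a = w then 1 / 2 else -2

def faceFunctional [Fintype V] : (V → ℝ) →ₗ[ℝ] ℝ where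
  toFun x := x v + (1 / 2) * x u + (1 / 2) * x w - 2 * ∑ i ∈ Finset.univ \ {u, v, w}, x i
  map_add' x y := by simp only [Pi.add_apply, Finset.sum_add_distrib]; ring
  map_smul' r x := by
    simp only [Pi.smul_apply, smul_eq_mul, ← Finset.mul_sum, RingHom.id_apply]; ring

variable {v u w}

lemma faceCoeff_le_one (a : V) : faceCoeff v u w a ≤ 1 := by
  unfold faceCoeff; split_ifs <;> norm_num

lemma eq_of_faceCoeff_eq_one {a : V} (ha : faceCoeff v u w a = 1) : a = v := by
  unfold faceCoeff at ha; split_ifs at ha with hav <;> first | exact hav | norm_num at ha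

lemma faceCoeff_add_le_one {G : SimpleGraph V} (h1 : ¬ G.Adj v u) (h2 : ¬ G.Adj v w) {a b : V}
    (hab : G.Adj a b) :
    faceCoeff v u w a + faceCoeff v u w b ≤ 1 ∧
      (faceCoeff v u w a + faceCoeff v u w b = 1 → ({a, b} : Set V) = {u, w}) := by
  -- an edge at `v` weighs `1 - 2`; any other edge at most `1/2 + 1/2`, with equality only for `uw`
  unfold faceCoeff
  split_ifs <;> subst_vars <;> norm_num <;> aesop (add simp [Set.pair_comm, G.adj_comm])

variable [Fintype V]

lemma faceFunctional_chi_singleton (hvu : v ≠ u) (hvw : v ≠ w) (huw : u ≠ w) (a : V) :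
    faceFunctional v u w (chi {a}) = faceCoeff v u w a := by
  simp only [faceFunctional, LinearMap.coe_mk, AddHom.coe_mk, chi_singleton, Finset.sum_pi_single',
    faceCoeff]
  by_cases hav : a = v <;> by_cases hau : a = u <;> by_cases haw : a = w <;> subst_vars <;> simp_all

variable {G : SimpleGraph V}

lemma faceFunctional_le_one_of_mem_polyVerts (hvu : v ≠ u) (hvw : v ≠ w) (huw : u ≠ w)
    (h1 : ¬ G.Adj v u) (h2 : ¬ G.Adj v w) {p : V → ℝ} (hp : p ∈ polyVerts G) :
    faceFunctional v u w p ≤ 1 ∧ (faceFunctional v u w p = 1 → p = chi {v} ∨ p = chi {u, w}) := by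
  rcases hp with rfl | ⟨a, rfl⟩ | ⟨a, b, hab, rfl⟩
  · simp [chi_empty]
  · rw [faceFunctional_chi_singleton hvu hvw huw]
    exact ⟨faceCoeff_le_one a, fun ha => Or.inl (by rw [eq_of_faceCoeff_eq_one ha])⟩
  · rw [chi_pair hab.ne, map_add, faceFunctional_chi_singleton hvu hvw huw,
      faceFunctional_chi_singleton hvu hvw huw, ← chi_pair hab.ne]
    obtain ⟨hle, heq⟩ := faceCoeff_add_le_one h1 h2 hab
    exact ⟨hle, fun h => Or.inr (by rw [heq h])⟩

lemma sep_polyVerts_faceFunctional_eq_one (hvu : v ≠ u) (hvw : v ≠ w) (huw : G.Adj u w)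
    (h1 : ¬ G.Adj v u) (h2 : ¬ G.Adj v w) :
    {p ∈ polyVerts G | faceFunctional v u w p = 1} = {chi {v}, chi {u, w}} := by
  refine Subset.antisymm (fun p hp =>
    (faceFunctional_le_one_of_mem_polyVerts hvu hvw huw.ne h1 h2 hp.1).2 hp.2) ?_
  rintro p (rfl | rfl)
  · refine ⟨Or.inr (Or.inl ⟨v, rfl⟩), ?_⟩
    simp [faceFunctional_chi_singleton hvu hvw huw.ne, faceCoeff]
  · refine ⟨Or.inr (Or.inr ⟨u, w, huw, rfl⟩), ?_⟩
    rw [chi_pair huw.ne, map_add, faceFunctional_chi_singleton hvu hvw huw.ne,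
      faceFunctional_chi_singleton hvu hvw huw.ne]
    norm_num [faceCoeff, hvu.symm, hvw.symm]

end FaceFunctional

theorem stmt4 [Fintype V] [DecidableEq V] (G : SimpleGraph V) {v u w : V}
    (huw : G.Adj u w) (hvu : v ≠ u) (hvw : v ≠ w)
    (h1 : ¬ G.Adj v u) (h2 : ¬ G.Adj v w) :
    (∀ x ∈ poly G,
        x v + (1 / 2) * x u + (1 / 2) * x w
          - 2 * ∑ i ∈ Finset.univ \ {u, v, w}, x i ≤ 1) ∧
    {x ∈ poly G |
        x v + (1 / 2) * x u + (1 / 2) * x w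
          - 2 * ∑ i ∈ Finset.univ \ {u, v, w}, x i = 1} =
      segment ℝ (chi ({v} : Set V)) (chi ({u, w} : Set V)) ∧
    AdjVert (poly G) (chi ({v} : Set V)) (chi ({u, w} : Set V)) := by
  have hverts : ∀ p ∈ polyVerts G, faceFunctional v u w p ≤ 1 := fun _ hp =>
    (faceFunctional_le_one_of_mem_polyVerts hvu hvw huw.ne h1 h2 hp).1
  have hpoly : ∀ x ∈ poly G, faceFunctional v u w x ≤ 1 := fun _ =>
    apply_le_of_mem_convexHull hverts
  have hface : {x ∈ poly G | faceFunctional v u w x = 1} = segment ℝ (chi {v}) (chi {u, w}) := by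
    rw [poly, sep_convexHull_apply_eq hverts, sep_polyVerts_faceFunctional_eq_one hvu hvw huw h1 h2,
      convexHull_pair]
  have hne : chi {v} ≠ chi {u, w} := fun h => by simpa [chi, hvu, hvw] using congrFun h v
  exact ⟨hpoly, hface, hne, hface ▸ isExtreme_sep_apply_eq hpoly⟩
end
end

section
/- The skeleton graph of P(Γ) has diameter at most 2: any two distinct vertices of P(Γ) are either adjacent, or have a common neighbor in the skeleton. -/
open Set

noncomputable section

variable {V : Type*}

/-!
Every vertex of `P(Γ)` is `χ S` with `S` empty, a node or an edge, and conversely each such `χ S`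
is a vertex, being a vertex of the unit cube. The segment `[χ A, χ B]` is an edge of the skeleton
as soon as some weight `a : V → ℝ` makes `∑ i ∈ S, a i` maximal over these `S` exactly at `A` and
`B`. Such weights exist for `∅` and a node, for a node and an edge through it, for two distinct
edges sharing a node, for two non-adjacent nodes, and for two edges with no edge between them.
Any two other vertices are then joined through a common neighbour: two nodes through `χ ∅`, a node
`v` and an edge `uw` through `χ {u, v}` or `χ {u}`, two disjoint edges through an edge joining them.
-/

section Exposed

variable {E : Type*} [AddCommGroup E] [Module ℝ E]

theorem isExtreme_sep_eq_of_forall_le (l : E →ₗ[ℝ] ℝ) {A : Set E} {c : ℝ}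
    (h : ∀ x ∈ A, l x ≤ c) : IsExtreme ℝ A {x ∈ A | l x = c} := by
  refine ⟨fun x hx => hx.1, ?_⟩
  rintro x₁ h₁ x₂ h₂ x ⟨-, hc⟩ ⟨a, b, ha, hb, hab, rfl⟩
  simp only [map_add, map_smul, smul_eq_mul] at hc
  refine mem_sep h₁ ((h x₁ h₁).antisymm (not_lt.1 fun hlt => ?_))
  have := mul_lt_mul_of_pos_left hlt ha
  have := mul_le_mul_of_nonneg_left (h x₂ h₂) hb.le
  have : (a + b) * c = c := by rw [hab, one_mul]
  linarith

theorem convexHull_inter_setOf_eq_subset (l : E →ₗ[ℝ] ℝ) {S T : Set E} {c : ℝ}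
    (hT : ∀ x ∈ T, l x = c) (hS : ∀ x ∈ S, x ∈ T ∨ l x < c) :
    convexHull ℝ S ∩ {x | l x = c} ⊆ convexHull ℝ T := by
  rintro x ⟨hx, hxc⟩
  have hU : Convex ℝ {x | l x < c} := convex_halfSpace_lt l.isLinear c
  have hST : S ⊆ T ∪ {x | l x < c} := hS
  rcases T.eq_empty_or_nonempty with rfl | hT₀
  · have : x ∈ {x | l x < c} :=
      convexHull_min (fun y hy => (hS y hy).resolve_left id) hU hx
    exact absurd hxc this.ne
  rcases eq_empty_or_nonempty {x | l x < c} with hU₀ | hU₀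
  · rw [hU₀, union_empty] at hST
    exact convexHull_mono hST hx
  have hjoin : x ∈ convexJoin ℝ (convexHull ℝ T) {x | l x < c} := by
    rw [← hU.convexHull_eq, ← convexHull_union hT₀ hU₀]
    exact convexHull_mono hST hx
  obtain ⟨y, hy, z, hz, s, t, hs, ht, hst, rfl⟩ := mem_convexJoin.1 hjoin
  have hyc : l y = c := convexHull_min hT (convex_hyperplane l.isLinear c) hy
  have hzc : l z < c := hz
  have ht0 : t = 0 := by
    simp only [mem_ofPred_eq, map_add, map_smul, smul_eq_mul, hyc] at hxc
    have : t * (c - l z) = 0 := by linear_combination c * hst - hxc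
    exact (mul_eq_zero.1 this).resolve_right (sub_pos.2 hzc).ne'
  simpa [ht0, (by linarith : s = 1)] using hy

theorem isExtreme_convexHull_of_forall_mem_or_lt (l : E →ₗ[ℝ] ℝ) {S T : Set E} {c : ℝ}
    (hTS : T ⊆ S) (hT : ∀ x ∈ T, l x = c) (hS : ∀ x ∈ S, x ∈ T ∨ l x < c) :
    IsExtreme ℝ (convexHull ℝ S) (convexHull ℝ T) := by
  have hle : ∀ x ∈ convexHull ℝ S, l x ≤ c := fun x hx =>
    convexHull_min (fun y hy => (hS y hy).elim (fun h => (hT y h).le) le_of_lt)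
      (convex_halfSpace_le l.isLinear c) hx
  convert isExtreme_sep_eq_of_forall_le l hle using 1
  refine (subset_inter (convexHull_mono hTS) ?_).antisymm
    (convexHull_inter_setOf_eq_subset l hT hS)
  exact convexHull_min hT (convex_hyperplane l.isLinear c)

end Exposed

theorem singleton_ne_pair {α : Type*} {u w : α} (h : u ≠ w) : ({u} : Set α) ≠ {u, w} :=
  fun e => h.symm (e ▸ mem_insert_of_mem u rfl : w ∈ ({u} : Set α))

section Chi

theorem chi_injective : Function.Injective (chi (V := V)) := fun _ _ h => indicator_one_inj ℝ h

theorem chi_mem_pi_Icc (S : Set V) : chi S ∈ univ.pi fun _ => Icc (0 : ℝ) 1 := by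
  intro i _
  by_cases hi : i ∈ S <;> simp [chi, hi]

theorem chi_mem_extremePoints {A : Set (V → ℝ)} (hA : A ⊆ univ.pi fun _ => Icc 0 1) {S : Set V}
    (hS : chi S ∈ A) : chi S ∈ A.extremePoints ℝ := by
  refine inter_extremePoints_subset_extremePoints_of_subset hA ⟨hS, ?_⟩
  rw [extremePoints_pi, extremePoints_Icc zero_le_one]
  intro i _
  by_cases hi : i ∈ S <;> simp [chi, hi]

variable [Fintype V]

@[simp]
theorem dotProduct_chi_empty (a : V → ℝ) : a ⬝ᵥ chi ∅ = 0 := by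
  simp [chi]

@[simp]
theorem dotProduct_chi_singleton (a : V → ℝ) (v : V) : a ⬝ᵥ chi {v} = a v := by
  classical
  rw [chi, indicator_singleton, dotProduct_single, mul_one]

theorem dotProduct_chi_pair (a : V → ℝ) {u w : V} (h : u ≠ w) : a ⬝ᵥ chi {u, w} = a u + a w := by
  have hchi : chi {u, w} = chi {u} + chi {w} := by
    rw [chi, insert_eq, indicator_union_of_disjoint (disjoint_singleton.2 h)]
    rfl
  rw [hchi, dotProduct_add, dotProduct_chi_singleton, dotProduct_chi_singleton]

end Chi

theorem AdjVert.symm {P : Set (V → ℝ)} {p q : V → ℝ} (h : AdjVert P p q) :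
    AdjVert P q p :=
  ⟨h.1.symm, segment_symm ℝ p q ▸ h.2⟩

def SkeletonDistLeTwo (P : Set (V → ℝ)) (p q : V → ℝ) : Prop :=
  AdjVert P p q ∨ ∃ r ∈ P.extremePoints ℝ, AdjVert P p r ∧ AdjVert P r q

theorem SkeletonDistLeTwo.symm {P : Set (V → ℝ)} {p q : V → ℝ}
    (h : SkeletonDistLeTwo P p q) : SkeletonDistLeTwo P q p := by
  rcases h with h | ⟨r, hr, hpr, hrq⟩
  · exact Or.inl h.symm
  · exact Or.inr ⟨r, hr, hrq.symm, hpr.symm⟩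

namespace SimpleGraph

variable {G : SimpleGraph V}

theorem chi_empty_mem_polyVerts : chi ∅ ∈ polyVerts G := Or.inl rfl

theorem chi_singleton_mem_polyVerts (v : V) : chi {v} ∈ polyVerts G := Or.inr (Or.inl ⟨v, rfl⟩)

theorem Adj.chi_mem_polyVerts {u w : V} (h : G.Adj u w) : chi {u, w} ∈ polyVerts G :=
  Or.inr (Or.inr ⟨u, w, h, rfl⟩)

theorem polyVerts_subset_range_chi : polyVerts G ⊆ range chi := by
  rintro x (rfl | ⟨_, rfl⟩ | ⟨_, _, _, rfl⟩) <;> exact mem_range_self _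

theorem poly_subset_pi_Icc : poly G ⊆ univ.pi fun _ => Icc 0 1 :=
  convexHull_min (polyVerts_subset_range_chi.trans (range_subset_iff.2 chi_mem_pi_Icc))
    (convex_pi fun _ _ => convex_Icc 0 1)

theorem polyVerts_subset_extremePoints : polyVerts G ⊆ (poly G).extremePoints ℝ := by
  intro x hx
  obtain ⟨S, rfl⟩ := polyVerts_subset_range_chi hx
  exact chi_mem_extremePoints poly_subset_pi_Icc (subset_convexHull ℝ _ hx)

variable [Fintype V]

theorem adjVert_chi_of_dotProduct (a : V → ℝ) (c : ℝ) {A B : Set V} (hA : chi A ∈ polyVerts G)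
    (hB : chi B ∈ polyVerts G) (hAB : A ≠ B) (hAc : a ⬝ᵥ chi A = c) (hBc : a ⬝ᵥ chi B = c)
    (h₀ : ∅ = A ∨ ∅ = B ∨ 0 < c) (h₁ : ∀ v, {v} = A ∨ {v} = B ∨ a v < c)
    (h₂ : ∀ u w, G.Adj u w → {u, w} = A ∨ {u, w} = B ∨ a u + a w < c) :
    AdjVert (poly G) (chi A) (chi B) := by
  refine ⟨chi_injective.ne hAB, ?_⟩
  rw [← convexHull_pair]
  refine isExtreme_convexHull_of_forall_mem_or_lt (dotProductBilin ℝ ℝ a) (pair_subset hA hB)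
    (by rintro x (rfl | rfl) <;> assumption) ?_
  simp only [mem_insert_iff, mem_singleton_iff, dotProductBilin_apply_apply]
  rintro x (rfl | ⟨v, rfl⟩ | ⟨u, w, huw, rfl⟩)
  · simpa only [chi_injective.eq_iff, dotProduct_chi_empty] using or_assoc.2 h₀
  · simpa only [chi_injective.eq_iff, dotProduct_chi_singleton] using or_assoc.2 (h₁ v)
  · simpa only [chi_injective.eq_iff, dotProduct_chi_pair _ huw.ne] using or_assoc.2 (h₂ u w huw)

theorem adjVert_empty_singleton (v : V) : AdjVert (poly G) (chi ∅) (chi {v}) := by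
  classical
  refine adjVert_chi_of_dotProduct (fun i => if i = v then 0 else -1) 0 chi_empty_mem_polyVerts
    (chi_singleton_mem_polyVerts v) (singleton_ne_empty v).symm (by simp) (by simp) (by simp)
    (fun y => by grind [singleton_eq_singleton_iff])
    (fun y z hyz => by grind [pair_eq_pair_iff, hyz.ne])

theorem adjVert_singleton_pair {u w : V} (h : G.Adj u w) :
    AdjVert (poly G) (chi {u}) (chi {u, w}) := by
  classical
  refine adjVert_chi_of_dotProduct (fun i => if i = u then 1 else if i = w then 0 else -1) 1
    (chi_singleton_mem_polyVerts u) h.chi_mem_polyVerts (singleton_ne_pair h.ne) (by simp)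
    (by simp [dotProduct_chi_pair _ h.ne, h.ne']) (by simp)
    (fun y => by grind [singleton_eq_singleton_iff])
    (fun y z hyz => by grind [pair_eq_pair_iff, hyz.ne])

theorem adjVert_singleton_singleton {u v : V} (huv : u ≠ v) (hadj : ¬ G.Adj u v) :
    AdjVert (poly G) (chi {u}) (chi {v}) := by
  classical
  refine adjVert_chi_of_dotProduct (fun i => if i = u ∨ i = v then 1 else -1) 1
    (chi_singleton_mem_polyVerts u) (chi_singleton_mem_polyVerts v) (by simpa using huv)
    (by simp) (by simp) (by simp) (fun y => by grind [singleton_eq_singleton_iff])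
    (fun y z hyz => by grind [pair_eq_pair_iff, hyz.ne, G.adj_comm])

theorem adjVert_pair_pair_of_forall_not_adj {u w u' w' : V} (huw : G.Adj u w)
    (huw' : G.Adj u' w') (hcross : ∀ a ∈ ({u, w} : Set V), ∀ b ∈ ({u', w'} : Set V), ¬ G.Adj a b) :
    AdjVert (poly G) (chi {u, w}) (chi {u', w'}) := by
  classical
  simp only [mem_insert_iff, mem_singleton_iff, forall_eq_or_imp, forall_eq] at hcross
  refine adjVert_chi_of_dotProduct
    (fun i => if i = u ∨ i = w ∨ i = u' ∨ i = w' then 1 else -1) 2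
    huw.chi_mem_polyVerts huw'.chi_mem_polyVerts (by grind [pair_eq_pair_iff])
    (by rw [dotProduct_chi_pair _ huw.ne]; grind) (by rw [dotProduct_chi_pair _ huw'.ne]; grind)
    (by simp) (fun y => by grind [singleton_eq_singleton_iff])
    (fun y z hyz => by grind [pair_eq_pair_iff, hyz.ne, G.adj_comm])

theorem adjVert_pair_pair_of_common {u w u' w' : V} (huw : G.Adj u w) (huw' : G.Adj u' w')
    (hne : ({u, w} : Set V) ≠ {u', w'}) (hc : u = u' ∨ u = w' ∨ w = u' ∨ w = w') :
    AdjVert (poly G) (chi {u, w}) (chi {u', w'}) := by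
  classical
  -- on a pair `S` the weight is `2 (|S ∩ A| + |S ∩ B|) - 2`, which is `4` only at `S = A, B`
  refine adjVert_chi_of_dotProduct
    (fun i => (if i = u ∨ i = w then 2 else 0) + (if i = u' ∨ i = w' then 2 else 0) - 1) 4
    huw.chi_mem_polyVerts huw'.chi_mem_polyVerts (by grind [pair_eq_pair_iff])
    (by rw [dotProduct_chi_pair _ huw.ne]; grind [pair_eq_pair_iff, huw.ne, huw'.ne])
    (by rw [dotProduct_chi_pair _ huw'.ne]; grind [pair_eq_pair_iff, huw.ne, huw'.ne]) (by simp)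
    (fun y => by grind [singleton_eq_singleton_iff])
    (fun y z hyz => by grind [pair_eq_pair_iff, hyz.ne, huw.ne, huw'.ne])

theorem skeletonDistLeTwo_chi_empty {q : V → ℝ} (hq : q ∈ polyVerts G) (hne : chi ∅ ≠ q) :
    SkeletonDistLeTwo (poly G) (chi ∅) q := by
  rcases hq with rfl | ⟨v, rfl⟩ | ⟨u, w, huw, rfl⟩
  · exact absurd rfl hne
  · exact Or.inl (adjVert_empty_singleton v)
  · exact Or.inr ⟨chi {u}, polyVerts_subset_extremePoints (chi_singleton_mem_polyVerts u),
      adjVert_empty_singleton u, adjVert_singleton_pair huw⟩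

theorem skeletonDistLeTwo_singleton_pair (v : V) {u w : V} (huw : G.Adj u w) :
    SkeletonDistLeTwo (poly G) (chi {v}) (chi {u, w}) := by
  by_cases hvu : v = u
  · subst hvu
    exact Or.inl (adjVert_singleton_pair huw)
  by_cases hvw : v = w
  · subst hvw
    rw [pair_comm]
    exact Or.inl (adjVert_singleton_pair huw.symm)
  by_cases huv : G.Adj u v
  · refine Or.inr ⟨chi {u, v}, polyVerts_subset_extremePoints huv.chi_mem_polyVerts,
      pair_comm v u ▸ adjVert_singleton_pair huv.symm, adjVert_pair_pair_of_common huv huw ?_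
      (Or.inl rfl)⟩
    simp [pair_eq_pair_iff, hvw, huv.ne']
  · exact Or.inr ⟨chi {u}, polyVerts_subset_extremePoints (chi_singleton_mem_polyVerts u),
      adjVert_singleton_singleton hvu fun h => huv h.symm, adjVert_singleton_pair huw⟩

theorem skeletonDistLeTwo_pair_pair {u w u' w' : V} (huw : G.Adj u w) (huw' : G.Adj u' w')
    (hne : ({u, w} : Set V) ≠ {u', w'}) :
    SkeletonDistLeTwo (poly G) (chi {u, w}) (chi {u', w'}) := by
  by_cases hc : u = u' ∨ u = w' ∨ w = u' ∨ w = w'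
  · exact Or.inl (adjVert_pair_pair_of_common huw huw' hne hc)
  by_cases hcross : ∃ a ∈ ({u, w} : Set V), ∃ b ∈ ({u', w'} : Set V), G.Adj a b
  · obtain ⟨a, ha, b, hb, hab⟩ := hcross
    simp only [mem_insert_iff, mem_singleton_iff] at ha hb
    refine Or.inr ⟨chi {a, b}, polyVerts_subset_extremePoints hab.chi_mem_polyVerts,
      adjVert_pair_pair_of_common huw hab ?_ (by grind),
      adjVert_pair_pair_of_common hab huw' ?_ (by grind)⟩ <;> grind [pair_eq_pair_iff]
  · push Not at hcross
    exact Or.inl (adjVert_pair_pair_of_forall_not_adj huw huw' hcross)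

theorem skeletonDistLeTwo_of_mem_polyVerts {p q : V → ℝ} (hp : p ∈ polyVerts G)
    (hq : q ∈ polyVerts G) (hpq : p ≠ q) : SkeletonDistLeTwo (poly G) p q := by
  rcases hp with rfl | ⟨v, rfl⟩ | ⟨u, w, huw, rfl⟩
  · exact skeletonDistLeTwo_chi_empty hq hpq
  · rcases hq with rfl | ⟨v', rfl⟩ | ⟨u', w', huw', rfl⟩
    · exact (skeletonDistLeTwo_chi_empty (chi_singleton_mem_polyVerts v) hpq.symm).symm
    · exact Or.inr ⟨chi ∅, polyVerts_subset_extremePoints chi_empty_mem_polyVerts,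
        (adjVert_empty_singleton v).symm, adjVert_empty_singleton v'⟩
    · exact skeletonDistLeTwo_singleton_pair v huw'
  · rcases hq with rfl | ⟨v, rfl⟩ | ⟨u', w', huw', rfl⟩
    · exact (skeletonDistLeTwo_chi_empty huw.chi_mem_polyVerts hpq.symm).symm
    · exact (skeletonDistLeTwo_singleton_pair v huw).symm
    · exact skeletonDistLeTwo_pair_pair huw huw' (chi_injective.ne_iff.1 hpq)

end SimpleGraph

theorem stmt9_general [Fintype V] (G : SimpleGraph V) :
    ∀ p ∈ (poly G).extremePoints ℝ, ∀ q ∈ (poly G).extremePoints ℝ, p ≠ q →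
      AdjVert (poly G) p q ∨
        ∃ r ∈ (poly G).extremePoints ℝ,
          AdjVert (poly G) p r ∧ AdjVert (poly G) r q := fun _ hp _ hq hpq =>
  SimpleGraph.skeletonDistLeTwo_of_mem_polyVerts (extremePoints_convexHull_subset hp)
    (extremePoints_convexHull_subset hq) hpq

theorem stmt9 [Fintype V] [Nonempty V] (G : SimpleGraph V) :
    ∀ p ∈ (poly G).extremePoints ℝ, ∀ q ∈ (poly G).extremePoints ℝ, p ≠ q →
      AdjVert (poly G) p q ∨
        ∃ r ∈ (poly G).extremePoints ℝ,
          AdjVert (poly G) p r ∧ AdjVert (poly G) r q :=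
  stmt9_general G
end
end
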